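/- arXiv:1105.0231 — 2 statements merged into one kernel-verified Lean document; each statement's English description precedes it below -/
import Mathlib

section
/- At every point of U, q̃ satisfies the Riccati equation along backward characteristics: q̃_t − c·q̃_x = ã₀ − ã₁·q̃ + ã₂·q̃². -/
/-!
Write `D = ∂ₜ - c ∂ₓ`; at a point, `D f` is the derivative of `f` in the direction `(1, -c)`,
so it obeys the Leibniz and chain rules. Since `m` is stationary, the system gives `z_t` and `u_t`
explicitly near each point; differentiating them in `x` and exchanging mixed partials, the second
derivatives of `u` and `z` cancel in `D β`, which is therefore quadratic in first derivatives.
Expanding `D q̃` with `D z = -K_c z^θ (u_x + m z_x)` and `D m_x = -c m_xx` (here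
`θ = (γ+1)/(γ-1)`) then reduces the Riccati equation to an identity between rational functions of
`z` and `z^(θ/2)`.
-/

open Real

/-- Partial derivative with respect to `t` (the first coordinate). -/
noncomputable def pdt (f : ℝ × ℝ → ℝ) (pt : ℝ × ℝ) : ℝ := fderiv ℝ f pt (1, 0)

/-- Partial derivative with respect to `x` (the second coordinate). -/
noncomputable def pdx (f : ℝ × ℝ → ℝ) (pt : ℝ × ℝ) : ℝ := fderiv ℝ f pt (0, 1)

open Filter Topology

section DirectionalDerivatives

variable {f g : ℝ × ℝ → ℝ} {pt v : ℝ × ℝ}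

theorem fderiv_apply_mul (hf : DifferentiableAt ℝ f pt) (hg : DifferentiableAt ℝ g pt) :
    fderiv ℝ (fun p => f p * g p) pt v = f pt * fderiv ℝ g pt v + g pt * fderiv ℝ f pt v := by
  simp [fderiv_fun_mul hf hg]

theorem fderiv_apply_add (hf : DifferentiableAt ℝ f pt) (hg : DifferentiableAt ℝ g pt) :
    fderiv ℝ (fun p => f p + g p) pt v = fderiv ℝ f pt v + fderiv ℝ g pt v := by
  simp [fderiv_fun_add hf hg]

theorem fderiv_apply_sub (hf : DifferentiableAt ℝ f pt) (hg : DifferentiableAt ℝ g pt) :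
    fderiv ℝ (fun p => f p - g p) pt v = fderiv ℝ f pt v - fderiv ℝ g pt v := by
  simp [fderiv_fun_sub hf hg]

theorem fderiv_apply_rpow_const (hf : DifferentiableAt ℝ f pt) (hf0 : f pt ≠ 0) (r : ℝ) :
    fderiv ℝ (fun p => f p ^ r) pt v = r * f pt ^ (r - 1) * fderiv ℝ f pt v := by
  simp [(hf.hasFDerivAt.rpow_const (Or.inl hf0) (p := r)).fderiv]

theorem pdt_sub_mul_pdx (a : ℝ) : pdt f pt - a * pdx f pt = fderiv ℝ f pt (1, -a) := by
  have hv : ((1 : ℝ), -a) = (1, 0) + (-a) • ((0 : ℝ), (1 : ℝ)) := by simp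
  rw [hv, map_add, map_smul, pdt, pdx, smul_eq_mul]
  ring

theorem ContDiffAt.differentiableAt_pdx (hf : ContDiffAt ℝ 2 f pt) :
    DifferentiableAt ℝ (pdx f) pt :=
  ((hf.fderiv_right le_rfl).differentiableAt one_ne_zero).clm_apply (differentiableAt_const _)

theorem pdt_pdx_comm (hf : ContDiffAt ℝ 2 f pt) : pdt (pdx f) pt = pdx (pdt f) pt := by
  have hd : DifferentiableAt ℝ (fderiv ℝ f) pt :=
    (hf.fderiv_right le_rfl).differentiableAt one_ne_zero
  change fderiv ℝ (fun p => fderiv ℝ f p (0, 1)) pt (1, 0)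
    = fderiv ℝ (fun p => fderiv ℝ f p (1, 0)) pt (0, 1)
  rw [fderiv_clm_apply hd (differentiableAt_const _),
    fderiv_clm_apply hd (differentiableAt_const _)]
  simpa using
    hf.isSymmSndFDerivAt (by simp [minSmoothness_of_isRCLikeNormedField]) (1, 0) (0, 1)

end DirectionalDerivatives

noncomputable def riemannBeta (k : ℝ) (u z m : ℝ × ℝ → ℝ) (p : ℝ × ℝ) : ℝ :=
  pdx u p - m p * pdx z p - k * pdx m p * z p

section TransportSystem

variable {Kc θ k : ℝ} {u z m : ℝ × ℝ → ℝ} {pt : ℝ × ℝ}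

theorem differentiableAt_riemannBeta (hu : ContDiffAt ℝ 2 u pt) (hz : ContDiffAt ℝ 2 z pt)
    (hm : ContDiffAt ℝ 2 m pt) : DifferentiableAt ℝ (riemannBeta k u z m) pt := by
  have hzd := hz.differentiableAt two_ne_zero
  have hmd := hm.differentiableAt two_ne_zero
  have hux := hu.differentiableAt_pdx
  have hzx := hz.differentiableAt_pdx
  have hmx := hm.differentiableAt_pdx
  unfold riemannBeta
  fun_prop

theorem pdt_pdx_eq_zero (hm : ContDiffAt ℝ 2 m pt) (hmt : pdt m =ᶠ[𝓝 pt] 0) :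
    pdt (pdx m) pt = 0 := by
  rw [pdt_pdx_comm hm, pdx, hmt.fderiv_eq]
  simp

theorem pdt_pdx_z_eq (hu : ContDiffAt ℝ 2 u pt) (hz : ContDiffAt ℝ 2 z pt) (hz0 : z pt ≠ 0)
    (hzt : pdt z =ᶠ[𝓝 pt] fun p => -Kc * z p ^ θ * pdx u p) :
    pdt (pdx z) pt = -Kc * (θ * z pt ^ (θ - 1) * pdx z pt * pdx u pt
      + z pt ^ θ * pdx (pdx u) pt) := by
  have hzd := hz.differentiableAt two_ne_zero
  have hux := hu.differentiableAt_pdx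
  rw [pdt_pdx_comm hz, pdx, hzt.fderiv_eq]
  simp (disch := first | assumption | fun_prop (disch := assumption)) only
    [fderiv_apply_mul, fderiv_apply_rpow_const, fderiv_const_apply, zero_apply]
  simp only [pdx]
  ring

theorem pdt_pdx_u_eq (hu : ContDiffAt ℝ 2 u pt) (hz : ContDiffAt ℝ 2 z pt)
    (hm : ContDiffAt ℝ 2 m pt) (hz0 : z pt ≠ 0)
    (hut : pdt u =ᶠ[𝓝 pt] fun p => -Kc * m p * z p ^ θ * (m p * pdx z p + k * z p * pdx m p)) :
    pdt (pdx u) pt = -Kc * ((pdx m pt * z pt ^ θ + m pt * θ * z pt ^ (θ - 1) * pdx z pt)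
        * (m pt * pdx z pt + k * z pt * pdx m pt)
      + m pt * z pt ^ θ * (pdx m pt * pdx z pt + m pt * pdx (pdx z) pt
        + k * (pdx z pt * pdx m pt + z pt * pdx (pdx m) pt))) := by
  have hzd := hz.differentiableAt two_ne_zero
  have hmd := hm.differentiableAt two_ne_zero
  have hzx := hz.differentiableAt_pdx
  have hmx := hm.differentiableAt_pdx
  rw [pdt_pdx_comm hu, pdx, hut.fderiv_eq]
  simp (disch := first | assumption | fun_prop (disch := assumption)) only
    [fderiv_apply_mul, fderiv_apply_add, fderiv_apply_rpow_const, fderiv_const_apply,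
      zero_apply]
  simp only [pdx]
  ring

theorem pdt_sub_mul_pdx_riemannBeta (hu : ContDiffAt ℝ 2 u pt) (hz : ContDiffAt ℝ 2 z pt)
    (hm : ContDiffAt ℝ 2 m pt) (hz0 : z pt ≠ 0)
    (hzt : pdt z =ᶠ[𝓝 pt] fun p => -Kc * z p ^ θ * pdx u p)
    (hut : pdt u =ᶠ[𝓝 pt] fun p => -Kc * m p * z p ^ θ * (m p * pdx z p + k * z p * pdx m p))
    (hmt : pdt m =ᶠ[𝓝 pt] 0) :
    pdt (riemannBeta k u z m) pt - Kc * m pt * z pt ^ θ * pdx (riemannBeta k u z m) pt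
      = Kc * (θ * z pt ^ (θ - 1) * m pt * pdx z pt * (pdx u pt - m pt * pdx z pt)
        + z pt ^ θ * (k * pdx m pt * (pdx u pt - pdx m pt * z pt)
          - (1 + k * θ) * m pt * pdx m pt * pdx z pt)) := by
  have hzd := hz.differentiableAt two_ne_zero
  have hmd := hm.differentiableAt two_ne_zero
  have hux := hu.differentiableAt_pdx
  have hzx := hz.differentiableAt_pdx
  have hmx := hm.differentiableAt_pdx
  rw [pdt_sub_mul_pdx]
  unfold riemannBeta
  simp (disch := first | assumption | fun_prop) only
    [fderiv_apply_mul, fderiv_apply_sub, fderiv_const_apply, zero_apply]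
  simp only [← pdt_sub_mul_pdx]
  rw [pdt_pdx_u_eq hu hz hm hz0 hut, pdt_pdx_z_eq hu hz hz0 hzt, pdt_pdx_eq_zero hm hmt,
    hzt.eq_of_nhds, hmt.eq_of_nhds, rpow_sub_one hz0]
  simp only [pdx, Pi.zero_apply]
  field_simp
  ring

end TransportSystem

section Euler

variable (γ Kc : ℝ) (u z m : ℝ × ℝ → ℝ)

noncomputable def qTilde (p : ℝ × ℝ) : ℝ :=
  z p ^ ((γ + 1) / (2 * (γ - 1))) * riemannBeta ((γ - 1) / γ) u z m p
    - ((γ - 1) / (γ * (3 * γ - 1))) * z p ^ ((γ + 1) / (2 * (γ - 1)) + 1) * pdx m p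

noncomputable def a0Tilde (p : ℝ × ℝ) : ℝ :=
  (Kc / γ) * (((γ - 1) / (3 * γ - 1)) * m p * pdx (pdx m) p
    - ((3 * γ + 1) * (γ - 1) / (3 * γ - 1) ^ 2) * (pdx m p) ^ 2)
    * z p ^ (3 * (γ + 1) / (2 * (γ - 1)) + 1)

noncomputable def a1Tilde (p : ℝ × ℝ) : ℝ :=
  Kc * (3 * (3 - γ) / (2 * (3 * γ - 1))) * pdx m p * z p ^ ((γ + 1) / (γ - 1))

noncomputable def a2Tilde (p : ℝ × ℝ) : ℝ :=
  -Kc * ((γ + 1) / (2 * (γ - 1))) * z p ^ ((γ + 1) / (2 * (γ - 1)) - 1)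

variable {γ Kc u z m} {pt : ℝ × ℝ}

theorem pdt_z_eq_of_euler {θ : ℝ} (hm : m pt ≠ 0)
    (h : pdt z pt + Kc * m pt * z pt ^ θ / m pt * pdx u pt = 0) :
    pdt z pt = -Kc * z pt ^ θ * pdx u pt := by
  field_simp at h
  linear_combination h

theorem pdt_u_eq_of_euler (hγ : 1 < γ) (hz : 0 < z pt)
    (h : pdt u pt + m pt * (Kc * m pt * z pt ^ ((γ + 1) / (γ - 1))) * pdx z pt
      + 2 * ((γ - 1) / (2 * γ) * Kc * m pt ^ 2 * z pt ^ (2 * γ / (γ - 1)) / m pt) * pdx m pt = 0) :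
    pdt u pt = -Kc * m pt * z pt ^ ((γ + 1) / (γ - 1))
      * (m pt * pdx z pt + (γ - 1) / γ * z pt * pdx m pt) := by
  have hγ1 : γ - 1 ≠ 0 := by linarith
  have hγ0 : γ ≠ 0 := by linarith
  rw [show 2 * γ / (γ - 1) = (γ + 1) / (γ - 1) + 1 by field_simp; ring, rpow_add_one hz.ne'] at h
  field_simp at h ⊢
  linear_combination h

theorem riccati_qTilde (hγ : 1 < γ) (hu : ContDiffAt ℝ 2 u pt) (hz : ContDiffAt ℝ 2 z pt)
    (hm : ContDiffAt ℝ 2 m pt) (hz_pos : 0 < z pt)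
    (hzt : pdt z =ᶠ[𝓝 pt] fun p => -Kc * z p ^ ((γ + 1) / (γ - 1)) * pdx u p)
    (hut : pdt u =ᶠ[𝓝 pt] fun p => -Kc * m p * z p ^ ((γ + 1) / (γ - 1))
      * (m p * pdx z p + (γ - 1) / γ * z p * pdx m p))
    (hmt : pdt m =ᶠ[𝓝 pt] 0) :
    pdt (qTilde γ u z m) pt - Kc * m pt * z pt ^ ((γ + 1) / (γ - 1)) * pdx (qTilde γ u z m) pt
      = a0Tilde γ Kc z m pt - a1Tilde γ Kc z m pt * qTilde γ u z m pt
        + a2Tilde γ Kc z pt * qTilde γ u z m pt ^ 2 := by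
  have hγ1 : γ - 1 ≠ 0 := by linarith
  have hγ0 : γ ≠ 0 := by linarith
  have h3γ : γ * 3 - 1 ≠ 0 := by linarith
  have hz0 := hz_pos.ne'
  have hzd := hz.differentiableAt two_ne_zero
  have hmx := hm.differentiableAt_pdx
  have hβ := differentiableAt_riemannBeta (k := (γ - 1) / γ) hu hz hm
  rw [pdt_sub_mul_pdx]
  unfold qTilde
  simp (disch := first | assumption | fun_prop (disch := assumption)) only
    [fderiv_apply_mul, fderiv_apply_sub, fderiv_apply_rpow_const, fderiv_const_apply, zero_apply]
  simp only [← pdt_sub_mul_pdx]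
  rw [pdt_sub_mul_pdx_riemannBeta hu hz hm hz0 hzt hut hmt, hzt.eq_of_nhds,
    pdt_pdx_eq_zero hm hmt]
  unfold a0Tilde a1Tilde a2Tilde riemannBeta
  -- write every power of `z` as a monomial in `z` and `z ^ (θ / 2)`
  rw [show (γ + 1) / (γ - 1) = (γ + 1) / (2 * (γ - 1)) + (γ + 1) / (2 * (γ - 1)) by
      field_simp; ring,
    show 3 * (γ + 1) / (2 * (γ - 1)) = (γ + 1) / (2 * (γ - 1)) + (γ + 1) / (2 * (γ - 1))
      + (γ + 1) / (2 * (γ - 1)) by field_simp; ring]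
  simp only [rpow_add hz_pos, rpow_sub_one hz0, rpow_one]
  field_simp
  ring

end Euler

theorem stmt_8_general
    (γ Kc : ℝ) (hγ : 1 < γ)
    (U : Set (ℝ × ℝ)) (hU : IsOpen U)
    (u z m : ℝ × ℝ → ℝ)
    (hu : ContDiffOn ℝ 2 u U) (hz : ContDiffOn ℝ 2 z U) (hm : ContDiffOn ℝ 2 m U)
    (hzpos : ∀ pt ∈ U, 0 < z pt) (hmpos : ∀ pt ∈ U, 0 < m pt)
    (c p : ℝ × ℝ → ℝ)
    (hc : c = fun pt => Kc * m pt * z pt ^ ((γ + 1) / (γ - 1)))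
    (hp : p = fun pt => ((γ - 1) / (2 * γ) * Kc) * (m pt) ^ 2 * z pt ^ (2 * γ / (γ - 1)))
    (heq1 : ∀ pt ∈ U, pdt z pt + (c pt / m pt) * pdx u pt = 0)
    (heq2 : ∀ pt ∈ U, pdt u pt + m pt * c pt * pdx z pt + 2 * (p pt / m pt) * pdx m pt = 0)
    (heq3 : ∀ pt ∈ U, pdt m pt = 0)
    (β : ℝ × ℝ → ℝ)
    (hβ : β = fun pt => pdx u pt - m pt * pdx z pt - ((γ - 1) / γ) * pdx m pt * z pt)
    (qt : ℝ × ℝ → ℝ)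
    (hqt : qt = fun pt => z pt ^ ((γ + 1) / (2 * (γ - 1))) * β pt
      - ((γ - 1) / (γ * (3 * γ - 1))) * z pt ^ ((γ + 1) / (2 * (γ - 1)) + 1) * pdx m pt)
    (a0t : ℝ × ℝ → ℝ)
    (ha0t : a0t = fun pt => (Kc / γ) * (((γ - 1) / (3 * γ - 1)) * m pt * pdx (pdx m) pt
      - ((3 * γ + 1) * (γ - 1) / (3 * γ - 1) ^ 2) * (pdx m pt) ^ 2)
      * z pt ^ (3 * (γ + 1) / (2 * (γ - 1)) + 1))
    (a1t : ℝ × ℝ → ℝ)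
    (ha1t : a1t = fun pt => Kc * (3 * (3 - γ) / (2 * (3 * γ - 1))) * pdx m pt * z pt ^ ((γ + 1) / (γ - 1)))
    (a2t : ℝ × ℝ → ℝ)
    (ha2t : a2t = fun pt => -Kc * ((γ + 1) / (2 * (γ - 1))) * z pt ^ ((γ + 1) / (2 * (γ - 1)) - 1))
 :
    ∀ pt ∈ U, pdt qt pt - c pt * pdx qt pt
      = a0t pt - a1t pt * qt pt + a2t pt * (qt pt) ^ 2 := by
  subst hc hp hβ hqt ha0t ha1t ha2t
  intro pt hpt
  have hU' := hU.mem_nhds hpt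
  exact riccati_qTilde hγ (hu.contDiffAt hU') (hz.contDiffAt hU') (hm.contDiffAt hU')
    (hzpos pt hpt)
    (by filter_upwards [hU'] with q hq using pdt_z_eq_of_euler (hmpos q hq).ne' (heq1 q hq))
    (by filter_upwards [hU'] with q hq using
      pdt_u_eq_of_euler hγ (hzpos q hq) (heq2 q hq))
    (by filter_upwards [hU'] with q hq using heq3 q hq)

/-- Riccati equation for `q̃` along backward characteristics:
`q̃‵ = ã₀ − ã₁·q̃ + ã₂·q̃²` on `U`. -/
theorem stmt_8
    (γ Kc : ℝ) (hγ : 1 < γ) (hKc : 0 < Kc)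
    (U : Set (ℝ × ℝ)) (hU : IsOpen U)
    (u z m : ℝ × ℝ → ℝ)
    (hu : ContDiffOn ℝ 2 u U) (hz : ContDiffOn ℝ 2 z U) (hm : ContDiffOn ℝ 2 m U)
    (hzpos : ∀ pt ∈ U, 0 < z pt) (hmpos : ∀ pt ∈ U, 0 < m pt)
    (c p : ℝ × ℝ → ℝ)
    (hc : c = fun pt => Kc * m pt * z pt ^ ((γ + 1) / (γ - 1)))
    (hp : p = fun pt => ((γ - 1) / (2 * γ) * Kc) * (m pt) ^ 2 * z pt ^ (2 * γ / (γ - 1)))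
    (heq1 : ∀ pt ∈ U, pdt z pt + (c pt / m pt) * pdx u pt = 0)
    (heq2 : ∀ pt ∈ U, pdt u pt + m pt * c pt * pdx z pt + 2 * (p pt / m pt) * pdx m pt = 0)
    (heq3 : ∀ pt ∈ U, pdt m pt = 0)
    (α β : ℝ × ℝ → ℝ)
    (hα : α = fun pt => pdx u pt + m pt * pdx z pt + ((γ - 1) / γ) * pdx m pt * z pt)
    (hβ : β = fun pt => pdx u pt - m pt * pdx z pt - ((γ - 1) / γ) * pdx m pt * z pt)
    (yt qt : ℝ × ℝ → ℝ)
    (hyt : yt = fun pt => z pt ^ ((γ + 1) / (2 * (γ - 1))) * α pt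
      + ((γ - 1) / (γ * (3 * γ - 1))) * z pt ^ ((γ + 1) / (2 * (γ - 1)) + 1) * pdx m pt)
    (hqt : qt = fun pt => z pt ^ ((γ + 1) / (2 * (γ - 1))) * β pt
      - ((γ - 1) / (γ * (3 * γ - 1))) * z pt ^ ((γ + 1) / (2 * (γ - 1)) + 1) * pdx m pt)
    (a0t : ℝ × ℝ → ℝ)
    (ha0t : a0t = fun pt => (Kc / γ) * (((γ - 1) / (3 * γ - 1)) * m pt * pdx (pdx m) pt
      - ((3 * γ + 1) * (γ - 1) / (3 * γ - 1) ^ 2) * (pdx m pt) ^ 2)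
      * z pt ^ (3 * (γ + 1) / (2 * (γ - 1)) + 1))
    (a1t : ℝ × ℝ → ℝ)
    (ha1t : a1t = fun pt => Kc * (3 * (3 - γ) / (2 * (3 * γ - 1))) * pdx m pt * z pt ^ ((γ + 1) / (γ - 1)))
    (a2t : ℝ × ℝ → ℝ)
    (ha2t : a2t = fun pt => -Kc * ((γ + 1) / (2 * (γ - 1))) * z pt ^ ((γ + 1) / (2 * (γ - 1)) - 1))
 :
    ∀ pt ∈ U, pdt qt pt - c pt * pdx qt pt
      = a0t pt - a1t pt * qt pt + a2t pt * (qt pt) ^ 2 :=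
  stmt_8_general γ Kc hγ U hU u z m hu hz hm hzpos hmpos c p hc hp heq1 heq2 heq3 β hβ qt hqt a0t
    ha0t a1t ha1t a2t ha2t
end

section
/- At every point of U, q satisfies the decoupled Riccati equation along backward characteristics: q_t − c·q_x = a₀ + a₂·q², where a₂ < 0 (Theorem 1.2, equation for q). -/
/-!
The Euler system expresses `z_t`, `u_t`, `m_t` through `x`-derivatives. Differentiating these
relations in `x` and using the symmetry of second derivatives gives `z_xt`, `u_xt`, `m_xt` as well,
so the chain-rule expansion of `q_t - c q_x` only involves `x`-derivatives. In it the second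
derivatives `u_xx` and `z_xx` cancel, and what is left is `a₀ + a₂ q²`.
-/

open Real

open Filter Topology

section DirectionalDerivative

variable {E : Type*} [NormedAddCommGroup E] [NormedSpace ℝ E] {f g : E → ℝ} {x v : E}

lemma fderiv_fun_add_apply (hf : DifferentiableAt ℝ f x) (hg : DifferentiableAt ℝ g x) :
    fderiv ℝ (fun y => f y + g y) x v = fderiv ℝ f x v + fderiv ℝ g x v := by
  rw [fderiv_fun_add hf hg, add_apply]

lemma fderiv_fun_sub_apply (hf : DifferentiableAt ℝ f x) (hg : DifferentiableAt ℝ g x) :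
    fderiv ℝ (fun y => f y - g y) x v = fderiv ℝ f x v - fderiv ℝ g x v := by
  rw [fderiv_fun_sub hf hg, sub_apply]

lemma fderiv_fun_neg_apply : fderiv ℝ (fun y => -f y) x v = -fderiv ℝ f x v := by
  rw [fderiv_fun_neg, neg_apply]

lemma fderiv_fun_mul_apply (hf : DifferentiableAt ℝ f x) (hg : DifferentiableAt ℝ g x) :
    fderiv ℝ (fun y => f y * g y) x v = fderiv ℝ f x v * g x + f x * fderiv ℝ g x v := by
  rw [fderiv_fun_mul hf hg]
  simp only [add_apply, smul_apply, smul_eq_mul]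
  ring

lemma fderiv_rpow_const_apply {e : ℝ} (hf : DifferentiableAt ℝ f x) (h0 : f x ≠ 0) :
    fderiv ℝ (fun y => f y ^ e) x v = e * f x ^ (e - 1) * fderiv ℝ f x v := by
  rw [(hf.hasFDerivAt.rpow_const (Or.inl h0)).fderiv, smul_apply, smul_eq_mul,
    mul_assoc]

lemma ContDiffAt.differentiableAt_fderiv_apply (hf : ContDiffAt ℝ 2 f x) (w : E) :
    DifferentiableAt ℝ (fun y => fderiv ℝ f y w) x :=
  ((hf.fderiv_right (m := 1) le_rfl).differentiableAt one_ne_zero).clm_apply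
    (differentiableAt_const w)

lemma ContDiffAt.fderiv_fderiv_apply_comm (hf : ContDiffAt ℝ 2 f x) (v w : E) :
    fderiv ℝ (fun y => fderiv ℝ f y w) x v = fderiv ℝ (fun y => fderiv ℝ f y v) x w := by
  have hd := (hf.fderiv_right (m := 1) le_rfl).differentiableAt one_ne_zero
  rw [fderiv_clm_apply hd (differentiableAt_const w), fderiv_clm_apply hd (differentiableAt_const v)]
  simpa using hf.isSymmSndFDerivAt (by simp) v w

end DirectionalDerivative

lemma pdt_pdx_of_eventuallyEq {f g : ℝ × ℝ → ℝ} {pt : ℝ × ℝ} (hf : ContDiffAt ℝ 2 f pt)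
    (h : pdt f =ᶠ[𝓝 pt] g) : pdt (pdx f) pt = pdx g pt := by
  rw [pdx, ← h.fderiv_eq]
  exact hf.fderiv_fderiv_apply_comm (1, 0) (0, 1)

namespace Euler

variable (γ Kc : ℝ) (u z m : ℝ × ℝ → ℝ)

noncomputable def soundSpeed : ℝ × ℝ → ℝ := fun pt => Kc * m pt * z pt ^ ((γ + 1) / (γ - 1))

noncomputable def riemannQ : ℝ × ℝ → ℝ := fun pt =>
  m pt ^ (-(3 * (3 - γ)) / (2 * (3 * γ - 1))) *
    (z pt ^ ((γ + 1) / (2 * (γ - 1))) *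
        (pdx u pt - m pt * pdx z pt - ((γ - 1) / γ) * pdx m pt * z pt)
      - ((γ - 1) / (γ * (3 * γ - 1))) * z pt ^ ((γ + 1) / (2 * (γ - 1)) + 1) * pdx m pt)

noncomputable def riccatiA₀ : ℝ × ℝ → ℝ := fun pt =>
  m pt ^ (-(3 * (3 - γ)) / (2 * (3 * γ - 1))) *
    ((Kc / γ) * (((γ - 1) / (3 * γ - 1)) * m pt * pdx (pdx m) pt
      - ((3 * γ + 1) * (γ - 1) / (3 * γ - 1) ^ 2) * (pdx m pt) ^ 2)
      * z pt ^ (3 * (γ + 1) / (2 * (γ - 1)) + 1))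

noncomputable def riccatiA₂ : ℝ × ℝ → ℝ := fun pt =>
  m pt ^ (3 * (3 - γ) / (2 * (3 * γ - 1))) *
    (-Kc * ((γ + 1) / (2 * (γ - 1))) * z pt ^ ((γ + 1) / (2 * (γ - 1)) - 1))

variable {γ Kc u z m}

theorem riccati_riemannQ {pt : ℝ × ℝ} (hγ : 1 < γ)
    (hu : ContDiffAt ℝ 2 u pt) (hz : ContDiffAt ℝ 2 z pt) (hm : ContDiffAt ℝ 2 m pt)
    (hz0 : 0 < z pt) (hm0 : 0 < m pt)
    (hzt : pdt z =ᶠ[𝓝 pt] fun p => -(Kc * z p ^ ((γ + 1) / (γ - 1)) * pdx u p))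
    (hut : pdt u =ᶠ[𝓝 pt] fun p => -(Kc * (m p * m p) * z p ^ ((γ + 1) / (γ - 1)) * pdx z p
      + (γ - 1) / γ * Kc * m p * z p ^ (2 * γ / (γ - 1)) * pdx m p))
    (hmt : pdt m =ᶠ[𝓝 pt] fun _ => 0) :
    pdt (riemannQ γ u z m) pt - soundSpeed γ Kc z m pt * pdx (riemannQ γ u z m) pt
      = riccatiA₀ γ Kc z m pt + riccatiA₂ γ Kc z m pt * riemannQ γ u z m pt ^ 2 := by
  have hzxt := pdt_pdx_of_eventuallyEq hz hzt
  have huxt := pdt_pdx_of_eventuallyEq hu hut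
  have hmxt := pdt_pdx_of_eventuallyEq hm hmt
  have hzt₀ := hzt.eq_of_nhds
  have hmt₀ := hmt.eq_of_nhds
  have dz := hz.differentiableAt two_ne_zero
  have dm := hm.differentiableAt two_ne_zero
  have dux := hu.differentiableAt_fderiv_apply (0, 1)
  have dzx := hz.differentiableAt_fderiv_apply (0, 1)
  have dmx := hm.differentiableAt_fderiv_apply (0, 1)
  have hz0' := hz0.ne'
  have hm0' := hm0.ne'
  have dzpow (e : ℝ) : DifferentiableAt ℝ (fun p => z p ^ e) pt := dz.rpow_const (Or.inl hz0')
  have dmpow (e : ℝ) : DifferentiableAt ℝ (fun p => m p ^ e) pt := dm.rpow_const (Or.inl hm0')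
  have hγ0 : γ ≠ 0 := by positivity
  have hγ1 : γ - 1 ≠ 0 := by linarith
  have hγ3 : 3 * γ - 1 ≠ 0 := by linarith
  -- every power of `z` that occurs is `z ^ ν` times an integer power of `z`
  obtain ⟨ν, hν⟩ : ∃ ν, (γ + 1) / (2 * (γ - 1)) = ν := ⟨_, rfl⟩
  obtain ⟨κ, hκ⟩ : ∃ κ, -(3 * (3 - γ)) / (2 * (3 * γ - 1)) = κ := ⟨_, rfl⟩
  have h2ν : (γ + 1) / (γ - 1) = ν + ν := by rw [← hν]; field_simp; ring
  have h2ν1 : 2 * γ / (γ - 1) = ν + ν + 1 := by rw [← hν]; field_simp; ring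
  have h3ν1 : 3 * (γ + 1) / (2 * (γ - 1)) + 1 = ν + ν + ν + 1 := by rw [← hν]; field_simp; ring
  have hnegκ : 3 * (3 - γ) / (2 * (3 * γ - 1)) = -κ := by rw [← hκ]; ring
  unfold riemannQ soundSpeed riccatiA₀ riccatiA₂
  unfold pdt at hzt₀ hmt₀ hzxt huxt hmxt ⊢
  unfold pdx at hzt₀ hzxt huxt hmxt ⊢
  simp only [h2ν, h2ν1, h3ν1, hnegκ, hν, hκ] at hzt₀ hzxt huxt ⊢
  simp (disch := first | assumption | fun_prop (disch := assumption)) only [fderiv_fun_add_apply,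
    fderiv_fun_sub_apply, fderiv_fun_mul_apply, fderiv_rpow_const_apply, fderiv_fun_neg_apply,
    fderiv_fun_const, Pi.zero_apply, zero_apply, hzt₀, hmt₀, hzxt, huxt, hmxt]
  simp only [rpow_add hz0, rpow_sub_one hz0', rpow_sub_one hm0', rpow_one, rpow_neg hm0.le]
  have hs : 0 < z pt ^ ν := rpow_pos_of_pos hz0 ν
  have hM : 0 < m pt ^ κ := rpow_pos_of_pos hm0 κ
  generalize z pt ^ ν = s at hs ⊢
  generalize m pt ^ κ = M at hM ⊢
  subst hν hκ
  field_simp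
  ring

theorem riccatiA₂_neg {pt : ℝ × ℝ} (hγ : 1 < γ) (hKc : 0 < Kc) (hz : 0 < z pt) (hm : 0 < m pt) :
    riccatiA₂ γ Kc z m pt < 0 := by
  have hν : 0 < (γ + 1) / (2 * (γ - 1)) := div_pos (by linarith) (by linarith)
  unfold riccatiA₂
  rw [neg_mul, neg_mul, mul_neg]
  exact neg_neg_of_pos (by positivity)

theorem pdt_z_eq {pt : ℝ × ℝ} {e : ℝ} (hm : m pt ≠ 0)
    (h : pdt z pt + (Kc * m pt * z pt ^ e / m pt) * pdx u pt = 0) :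
    pdt z pt = -(Kc * z pt ^ e * pdx u pt) := by
  field_simp at h
  linear_combination h

theorem pdt_u_eq {pt : ℝ × ℝ} {e e' : ℝ}
    (h : pdt u pt + m pt * (Kc * m pt * z pt ^ e) * pdx z pt
      + 2 * ((γ - 1) / (2 * γ) * Kc * m pt ^ 2 * z pt ^ e' / m pt) * pdx m pt = 0) :
    pdt u pt = -(Kc * (m pt * m pt) * z pt ^ e * pdx z pt
      + (γ - 1) / γ * Kc * m pt * z pt ^ e' * pdx m pt) := by
  have hm : m pt ^ 2 / m pt = m pt := by rw [sq, mul_self_div_self]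
  linear_combination h - (γ - 1) / γ * Kc * z pt ^ e' * pdx m pt * hm

end Euler

theorem stmt_10_general
    (γ Kc : ℝ) (hγ : 1 < γ) (hKc : 0 < Kc)
    (U : Set (ℝ × ℝ)) (hU : IsOpen U)
    (u z m : ℝ × ℝ → ℝ)
    (hu : ContDiffOn ℝ 2 u U) (hz : ContDiffOn ℝ 2 z U) (hm : ContDiffOn ℝ 2 m U)
    (hzpos : ∀ pt ∈ U, 0 < z pt) (hmpos : ∀ pt ∈ U, 0 < m pt)
    (c p : ℝ × ℝ → ℝ)
    (hc : c = fun pt => Kc * m pt * z pt ^ ((γ + 1) / (γ - 1)))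
    (hp : p = fun pt => ((γ - 1) / (2 * γ) * Kc) * (m pt) ^ 2 * z pt ^ (2 * γ / (γ - 1)))
    (heq1 : ∀ pt ∈ U, pdt z pt + (c pt / m pt) * pdx u pt = 0)
    (heq2 : ∀ pt ∈ U, pdt u pt + m pt * c pt * pdx z pt + 2 * (p pt / m pt) * pdx m pt = 0)
    (heq3 : ∀ pt ∈ U, pdt m pt = 0)
    (β : ℝ × ℝ → ℝ)
    (hβ : β = fun pt => pdx u pt - m pt * pdx z pt - ((γ - 1) / γ) * pdx m pt * z pt)
    (qt : ℝ × ℝ → ℝ)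
    (hqt : qt = fun pt => z pt ^ ((γ + 1) / (2 * (γ - 1))) * β pt
      - ((γ - 1) / (γ * (3 * γ - 1))) * z pt ^ ((γ + 1) / (2 * (γ - 1)) + 1) * pdx m pt)
    (a0t : ℝ × ℝ → ℝ)
    (ha0t : a0t = fun pt => (Kc / γ) * (((γ - 1) / (3 * γ - 1)) * m pt * pdx (pdx m) pt
      - ((3 * γ + 1) * (γ - 1) / (3 * γ - 1) ^ 2) * (pdx m pt) ^ 2)
      * z pt ^ (3 * (γ + 1) / (2 * (γ - 1)) + 1))
    (a2t : ℝ × ℝ → ℝ)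
    (ha2t : a2t = fun pt => -Kc * ((γ + 1) / (2 * (γ - 1))) * z pt ^ ((γ + 1) / (2 * (γ - 1)) - 1))
    (qf : ℝ × ℝ → ℝ)
    (hqf : qf = fun pt => m pt ^ (-(3 * (3 - γ)) / (2 * (3 * γ - 1))) * qt pt)
    (a0 a2 : ℝ × ℝ → ℝ)
    (ha0 : a0 = fun pt => m pt ^ (-(3 * (3 - γ)) / (2 * (3 * γ - 1))) * a0t pt)
    (ha2 : a2 = fun pt => m pt ^ (3 * (3 - γ) / (2 * (3 * γ - 1))) * a2t pt)
 :
    ∀ pt ∈ U,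
      pdt qf pt - c pt * pdx qf pt = a0 pt + a2 pt * (qf pt) ^ 2 ∧ a2 pt < 0 := by
  subst hc hp hβ hqt ha0t ha2t hqf ha0 ha2
  intro pt hpt
  have hUpt : U ∈ 𝓝 pt := hU.mem_nhds hpt
  refine ⟨Euler.riccati_riemannQ hγ (hu.contDiffAt hUpt) (hz.contDiffAt hUpt) (hm.contDiffAt hUpt)
    (hzpos pt hpt) (hmpos pt hpt) ?_ ?_ ?_, Euler.riccatiA₂_neg hγ hKc (hzpos pt hpt) (hmpos pt hpt)⟩
  · exact eventually_of_mem hUpt fun p hp => Euler.pdt_z_eq (hmpos p hp).ne' (heq1 p hp)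
  · exact eventually_of_mem hUpt fun p hp => Euler.pdt_u_eq (heq2 p hp)
  · exact eventually_of_mem hUpt fun p hp => heq3 p hp

/-- Theorem 1.2, equation for `q`: `q‵ = a₀ + a₂·q²` with `a₂ < 0` on `U`. -/
theorem stmt_10
    (γ Kc : ℝ) (hγ : 1 < γ) (hKc : 0 < Kc)
    (U : Set (ℝ × ℝ)) (hU : IsOpen U)
    (u z m : ℝ × ℝ → ℝ)
    (hu : ContDiffOn ℝ 2 u U) (hz : ContDiffOn ℝ 2 z U) (hm : ContDiffOn ℝ 2 m U)
    (hzpos : ∀ pt ∈ U, 0 < z pt) (hmpos : ∀ pt ∈ U, 0 < m pt)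
    (c p : ℝ × ℝ → ℝ)
    (hc : c = fun pt => Kc * m pt * z pt ^ ((γ + 1) / (γ - 1)))
    (hp : p = fun pt => ((γ - 1) / (2 * γ) * Kc) * (m pt) ^ 2 * z pt ^ (2 * γ / (γ - 1)))
    (heq1 : ∀ pt ∈ U, pdt z pt + (c pt / m pt) * pdx u pt = 0)
    (heq2 : ∀ pt ∈ U, pdt u pt + m pt * c pt * pdx z pt + 2 * (p pt / m pt) * pdx m pt = 0)
    (heq3 : ∀ pt ∈ U, pdt m pt = 0)
    (α β : ℝ × ℝ → ℝ)
    (hα : α = fun pt => pdx u pt + m pt * pdx z pt + ((γ - 1) / γ) * pdx m pt * z pt)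
    (hβ : β = fun pt => pdx u pt - m pt * pdx z pt - ((γ - 1) / γ) * pdx m pt * z pt)
    (yt qt : ℝ × ℝ → ℝ)
    (hyt : yt = fun pt => z pt ^ ((γ + 1) / (2 * (γ - 1))) * α pt
      + ((γ - 1) / (γ * (3 * γ - 1))) * z pt ^ ((γ + 1) / (2 * (γ - 1)) + 1) * pdx m pt)
    (hqt : qt = fun pt => z pt ^ ((γ + 1) / (2 * (γ - 1))) * β pt
      - ((γ - 1) / (γ * (3 * γ - 1))) * z pt ^ ((γ + 1) / (2 * (γ - 1)) + 1) * pdx m pt)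
    (a0t : ℝ × ℝ → ℝ)
    (ha0t : a0t = fun pt => (Kc / γ) * (((γ - 1) / (3 * γ - 1)) * m pt * pdx (pdx m) pt
      - ((3 * γ + 1) * (γ - 1) / (3 * γ - 1) ^ 2) * (pdx m pt) ^ 2)
      * z pt ^ (3 * (γ + 1) / (2 * (γ - 1)) + 1))
    (a2t : ℝ × ℝ → ℝ)
    (ha2t : a2t = fun pt => -Kc * ((γ + 1) / (2 * (γ - 1))) * z pt ^ ((γ + 1) / (2 * (γ - 1)) - 1))
    (yf qf : ℝ × ℝ → ℝ)
    (hyf : yf = fun pt => m pt ^ (-(3 * (3 - γ)) / (2 * (3 * γ - 1))) * yt pt)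
    (hqf : qf = fun pt => m pt ^ (-(3 * (3 - γ)) / (2 * (3 * γ - 1))) * qt pt)
    (a0 a2 : ℝ × ℝ → ℝ)
    (ha0 : a0 = fun pt => m pt ^ (-(3 * (3 - γ)) / (2 * (3 * γ - 1))) * a0t pt)
    (ha2 : a2 = fun pt => m pt ^ (3 * (3 - γ) / (2 * (3 * γ - 1))) * a2t pt)
 :
    ∀ pt ∈ U,
      pdt qf pt - c pt * pdx qf pt = a0 pt + a2 pt * (qf pt) ^ 2 ∧ a2 pt < 0 :=
  stmt_10_general γ Kc hγ hKc U hU u z m hu hz hm hzpos hmpos c p hc hp heq1 heq2 heq3 β hβ qt hqt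
    a0t ha0t a2t ha2t qf hqf a0 a2 ha0 ha2
end
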